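/- Let (i,k),(j,l)∈I^∞ with a_{ij}=0. Then the commutator X = f_{ik}f_{jl} − f_{jl}f_{ik} belongs to the radical ℛ of ( , )_L. -/

import Mathlib

/- Setting: quantum Borcherds-Bozec algebras (Fan–Kang–Kim–Tolmachov, arXiv:2108.04732).
   Common framework for the free algebra ℱ over ℚ(q) with its Q₋-grading and
   twisted comultiplication ϱ. -/

open scoped TensorProduct

noncomputable section

/-- The base field ℚ(q). -/
abbrev KQ : Type := RatFunc ℚ

/-- The indeterminate q. -/
abbrev qq : KQ := RatFunc.X

/-- An even symmetrizable Borcherds–Cartan matrix together with its symmetrizing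
integers `r i > 0`. -/
structure BCMatrix (I : Type*) where
  a : I → I → ℤ
  r : I → ℤ
  r_pos : ∀ i, 0 < r i
  symmetrizable : ∀ i j, r i * a i j = r j * a j i
  diag : ∀ i, a i i = 2 ∨ (a i i ≤ 0 ∧ Even (a i i))
  offdiag : ∀ i j, i ≠ j → a i j ≤ 0

namespace BCMatrix

variable {I : Type*} (A : BCMatrix I)

/-- `(i,l) ∈ I^∞ = (I^re × {1}) ∪ (I^im × ℤ_{>0})`. -/
def validIdx (i : I) (l : ℕ) : Prop :=
  (A.a i i = 2 ∧ l = 1) ∨ (A.a i i ≤ 0 ∧ 1 ≤ l)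

/-- The index set `I^∞`. -/
def Iinf := {p : I × ℕ // A.validIdx p.1 p.2}

/-- The free associative algebra `ℱ = ℚ(q)⟨f_{il} : (i,l) ∈ I^∞⟩`. -/
abbrev FA := FreeAlgebra KQ A.Iinf

/-- The generators `f_{il}` of `ℱ`, with the conventions `f_{i0} = 1` and
`f_{il} = 0` for `(i,l)` out of range. -/
def gen (i : I) (l : ℕ) : A.FA :=
  letI := Classical.propDecidable (A.validIdx i l)
  if h : A.validIdx i l then FreeAlgebra.ι KQ (⟨(i,l), h⟩ : A.Iinf)
  else if l = 0 then 1 else 0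

/-- The symmetric bilinear form on the root lattice `Q = ⊕ ℤ α_i`,
`(α_i, α_j) = r_i a_{ij}`. -/
def rootForm (β γ : I →₀ ℤ) : ℤ :=
  β.sum fun i m => γ.sum fun j n => m * n * (A.r i * A.a i j)

/-- Degree of a word in the generators: `deg f_{il} = -l α_i`. -/
def wordDeg (w : List A.Iinf) : I →₀ ℤ :=
  (w.map fun p => Finsupp.single p.1.1 (-(p.1.2 : ℤ))).sum

/-- The weight space `ℱ_β`: the span of the words of degree `β`. -/
def weightSpace (β : I →₀ ℤ) : Submodule KQ A.FA :=
  Submodule.span KQ {x | ∃ w : List A.Iinf, A.wordDeg w = β ∧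
    x = (w.map (FreeAlgebra.ι KQ)).prod}

/-- `q_i = q^{r_i}`. -/
def qi (i : I) : KQ := qq ^ (A.r i)

/-- `q_{(i)} = q^{(α_i,α_i)/2}`. -/
def qsh (i : I) : KQ := qq ^ ((A.r i * A.a i i) / 2)

/-- The quantum integer `[n]_i`. -/
def qint (i : I) (n : ℕ) : KQ :=
  (A.qi i ^ (n : ℤ) - A.qi i ^ (-(n : ℤ))) / (A.qi i - (A.qi i)⁻¹)

/-- The quantum factorial `[n]_i!`. -/
def qfact (i : I) (n : ℕ) : KQ := ∏ k ∈ Finset.range n, A.qint i (k + 1)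

/-- The divided power `f_i^{(n)} = f_{i1}^n/[n]_i!`. -/
def fdpow (i : I) (n : ℕ) : A.FA := (A.qfact i n)⁻¹ • (A.gen i 1) ^ n

/-- For `i ∈ I^im` and a composition `𝐜 = (c₁,…,c_t)` of `l`,
`f_{i,𝐜} = f_{ic₁} ⋯ f_{ic_t}`. -/
def fcomp (i : I) {l : ℕ} (c : Composition l) : A.FA :=
  (c.blocks.map (A.gen i)).prod

end BCMatrix

/-- The comultiplication data on `ℱ`: the twisted multiplication on `ℱ ⊗ ℱ`
(`(x₁⊗x₂)(y₁⊗y₂) = q^{-(|x₂|,|y₁|)} x₁y₁ ⊗ x₂y₂`) and the algebra homomorphism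
`ϱ : ℱ → ℱ ⊗ ℱ` with `ϱ(f_{il}) = Σ_{m+n=l} q_{(i)}^{-mn} f_{im} ⊗ f_{in}`. -/
structure CoMult {I : Type*} (A : BCMatrix I) where
  tmul : (A.FA ⊗[KQ] A.FA) →ₗ[KQ] (A.FA ⊗[KQ] A.FA) →ₗ[KQ] (A.FA ⊗[KQ] A.FA)
  tmul_spec : ∀ (β γ : I →₀ ℤ) (x₁ x₂ y₁ y₂ : A.FA),
    x₂ ∈ A.weightSpace β → y₁ ∈ A.weightSpace γ →
    tmul (x₁ ⊗ₜ x₂) (y₁ ⊗ₜ y₂) =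
      (qq ^ (-(A.rootForm β γ))) • ((x₁ * y₁) ⊗ₜ[KQ] (x₂ * y₂))
  rho : A.FA →ₗ[KQ] (A.FA ⊗[KQ] A.FA)
  rho_one : rho 1 = 1 ⊗ₜ[KQ] 1
  rho_mul : ∀ x y, rho (x * y) = tmul (rho x) (rho y)
  rho_gen : ∀ i l, A.validIdx i l →
    rho (A.gen i l) = ∑ m ∈ Finset.range (l + 1),
      (A.qsh i ^ (-((m : ℤ) * ((l : ℤ) - (m : ℤ))))) • (A.gen i m ⊗ₜ[KQ] A.gen i (l - m))

/-- Lusztig's bilinear form `( , )_L` on `ℱ`, associated with the family `ν`. -/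
structure LusztigForm {I : Type*} (A : BCMatrix I) (C : CoMult A) (ν : I → ℕ → KQ) where
  B : A.FA →ₗ[KQ] A.FA →ₗ[KQ] KQ
  symm : ∀ x y, B x y = B y x
  wt : ∀ β γ : I →₀ ℤ, β ≠ γ → ∀ x ∈ A.weightSpace β, ∀ y ∈ A.weightSpace γ, B x y = 0
  one_one : B 1 1 = 1
  gen_gen : ∀ i l, A.validIdx i l → B (A.gen i l) (A.gen i l) = ν i l
  mul_compat : ∀ x y z,
    B x (y * z) = LinearMap.BilinForm.tmul B B (C.rho x) (y ⊗ₜ[KQ] z)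

/-- The radical `ℛ` of the bilinear form. -/
def LusztigForm.radical {I : Type*} {A : BCMatrix I} {C : CoMult A} {ν : I → ℕ → KQ}
    (L : LusztigForm A C ν) : Submodule KQ A.FA :=
  LinearMap.ker L.B

/-
Write `X_{mn} = f_{im} f_{jn} - f_{jn} f_{im}`. As `a_{ij} = a_{ji} = 0`, the twist of `ℱ ⊗ ℱ`
between `i`- and `j`-factors is trivial, so `ϱ(f_{im} f_{jn})` and `ϱ(f_{jn} f_{im})` are the same
sum `Σ_{s,t} c_s c_t (f_{is} ⊗ f_{i,m-s})(f_{jt} ⊗ f_{j,n-t})` with the factors multiplied in the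
two orders. Hence `(X_{mn}, y z)_L = 0` as soon as every `X_{st}` with `s ≤ m`, `t ≤ n` is orthogonal
to `y` and to `z`, which sets up an induction on `m + n` and on `y`. The base cases `y = 1` and
`y = f_{i'l'}` use the other slot: `ϱ(y)` is invariant under the flip of `ℱ ⊗ ℱ`, because
`q_{(i')}^{-s(l'-s)}` is symmetric under `s ↦ l' - s`, so `(x z, y)_L = (z x, y)_L` for all `x, z`.
-/

lemma LinearMap.BilinForm.tmul_comm_apply {R M₁ M₂ : Type*} [CommSemiring R]
    [AddCommMonoid M₁] [AddCommMonoid M₂] [Module R M₁] [Module R M₂]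
    (B₁ : LinearMap.BilinForm R M₁) (B₂ : LinearMap.BilinForm R M₂) (t : M₂ ⊗[R] M₁)
    (x : M₁) (y : M₂) :
    B₁.tmul B₂ (TensorProduct.comm R M₂ M₁ t) (x ⊗ₜ y) = B₂.tmul B₁ t (y ⊗ₜ x) := by
  induction t using TensorProduct.induction_on with
  | zero => simp
  | tmul a b => simp [mul_comm]
  | add a b ha hb => simp only [map_add, LinearMap.add_apply, ha, hb]

namespace BCMatrix

variable {I : Type*} (A : BCMatrix I)

lemma a_eq_zero_symm {i j : I} (hij : A.a i j = 0) : A.a j i = 0 := by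
  have h := A.symmetrizable i j
  rw [hij, mul_zero, eq_comm, mul_eq_zero] at h
  exact h.resolve_left (A.r_pos j).ne'

lemma not_validIdx_zero (i : I) : ¬ A.validIdx i 0 := by
  rintro (⟨_, h⟩ | ⟨_, h⟩) <;> omega

lemma gen_zero (i : I) : A.gen i 0 = 1 := by
  rw [gen, dif_neg (A.not_validIdx_zero i), if_pos rfl]

lemma gen_of_validIdx {i : I} {l : ℕ} (h : A.validIdx i l) :
    A.gen i l = FreeAlgebra.ι KQ (⟨(i, l), h⟩ : A.Iinf) :=
  dif_pos h

lemma gen_of_not_validIdx {i : I} {l : ℕ} (h : ¬ A.validIdx i l) (hl : l ≠ 0) :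
    A.gen i l = 0 := by
  rw [gen, dif_neg h, if_neg hl]

lemma gen_eq_zero_or_eq_one_or_validIdx (i : I) (l : ℕ) :
    A.gen i l = 0 ∨ A.gen i l = 1 ∨ A.validIdx i l := by
  by_cases h : A.validIdx i l
  · exact .inr (.inr h)
  rcases eq_or_ne l 0 with rfl | hl
  · exact .inr (.inl (A.gen_zero i))
  · exact .inl (A.gen_of_not_validIdx h hl)

lemma one_mem_weightSpace : (1 : A.FA) ∈ A.weightSpace 0 :=
  Submodule.subset_span ⟨[], by simp [wordDeg], by simp⟩

lemma gen_mem_weightSpace (i : I) (l : ℕ) :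
    A.gen i l ∈ A.weightSpace (Finsupp.single i (-(l : ℤ))) := by
  by_cases h : A.validIdx i l
  · exact Submodule.subset_span ⟨[⟨(i, l), h⟩], by simp [wordDeg, List.map],
      by simp [A.gen_of_validIdx h, List.map]; rfl⟩
  rcases eq_or_ne l 0 with rfl | hl
  · simpa [A.gen_zero] using A.one_mem_weightSpace
  · rw [A.gen_of_not_validIdx h hl]
    exact Submodule.zero_mem _

lemma rootForm_single (i j : I) (a b : ℤ) :
    A.rootForm (Finsupp.single i a) (Finsupp.single j b) = a * b * (A.r i * A.a i j) := by
  rw [rootForm, Finsupp.sum_single_index (by simp), Finsupp.sum_single_index (by simp)]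

end BCMatrix

namespace CoMult

variable {I : Type*} {A : BCMatrix I} (C : CoMult A)

lemma tmul_gen_tmul_gen {i j : I} (hij : A.a i j = 0) (s s' t t' : ℕ) :
    C.tmul (A.gen i s ⊗ₜ A.gen i s') (A.gen j t ⊗ₜ A.gen j t') =
      (A.gen i s * A.gen j t) ⊗ₜ (A.gen i s' * A.gen j t') := by
  rw [C.tmul_spec _ _ _ _ _ _ (A.gen_mem_weightSpace i s') (A.gen_mem_weightSpace j t),
    A.rootForm_single, hij]
  simp

lemma rho_gen_mul_gen {i j : I} {m n : ℕ} (hm : A.validIdx i m) (hn : A.validIdx j n)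
    (hij : A.a i j = 0) :
    C.rho (A.gen i m * A.gen j n) = ∑ s ∈ Finset.range (m + 1), ∑ t ∈ Finset.range (n + 1),
      (A.qsh i ^ (-((s : ℤ) * ((m : ℤ) - s))) * A.qsh j ^ (-((t : ℤ) * ((n : ℤ) - t)))) •
        ((A.gen i s * A.gen j t) ⊗ₜ (A.gen i (m - s) * A.gen j (n - t))) := by
  rw [C.rho_mul, C.rho_gen i m hm, C.rho_gen j n hn]
  simp only [map_sum, map_smul, LinearMap.sum_apply, LinearMap.smul_apply,
    C.tmul_gen_tmul_gen hij, Finset.smul_sum, smul_smul]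
  rw [Finset.sum_comm]
  exact Finset.sum_congr rfl fun s _ => Finset.sum_congr rfl fun t _ => by rw [mul_comm]

lemma comm_rho_one : TensorProduct.comm KQ A.FA A.FA (C.rho 1) = C.rho 1 := by
  simp [C.rho_one]

lemma comm_rho_gen {i : I} {l : ℕ} (h : A.validIdx i l) :
    TensorProduct.comm KQ A.FA A.FA (C.rho (A.gen i l)) = C.rho (A.gen i l) := by
  rw [C.rho_gen i l h, map_sum]
  conv_rhs => rw [← Finset.sum_range_reflect]
  refine Finset.sum_congr rfl fun m hm => ?_
  have hml : m ≤ l := Finset.mem_range_succ_iff.mp hm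
  rw [map_smul, TensorProduct.comm_tmul, Nat.add_sub_cancel, Nat.sub_sub_self hml, Nat.cast_sub hml]
  ring_nf

end CoMult

namespace LusztigForm

variable {I : Type*} {A : BCMatrix I} {C : CoMult A} {ν : I → ℕ → KQ} (L : LusztigForm A C ν)

lemma apply_mul_comm_of_comm_rho {u : A.FA}
    (hu : TensorProduct.comm KQ A.FA A.FA (C.rho u) = C.rho u) (x y : A.FA) :
    L.B (x * y) u = L.B (y * x) u := by
  rw [L.symm, L.symm _ u, L.mul_compat, L.mul_compat,
    ← LinearMap.BilinForm.tmul_comm_apply, hu]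

lemma apply_gen_mul_gen_mul {i j : I} {m n : ℕ} (hm : A.validIdx i m) (hn : A.validIdx j n)
    (hij : A.a i j = 0) (y z : A.FA) :
    L.B (A.gen i m * A.gen j n) (y * z) =
      ∑ s ∈ Finset.range (m + 1), ∑ t ∈ Finset.range (n + 1),
        (A.qsh i ^ (-((s : ℤ) * ((m : ℤ) - s))) * A.qsh j ^ (-((t : ℤ) * ((n : ℤ) - t)))) *
          (L.B (A.gen i s * A.gen j t) y * L.B (A.gen i (m - s) * A.gen j (n - t)) z) := by
  rw [L.mul_compat, C.rho_gen_mul_gen hm hn hij]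
  simp only [map_sum, map_smul, LinearMap.sum_apply, LinearMap.smul_apply,
    LinearMap.BilinForm.tensorDistrib_tmul, smul_eq_mul, mul_comm (L.B _ z)]

theorem apply_gen_mul_gen_comm {i j : I} (hij : A.a i j = 0) (m n : ℕ) (y : A.FA) :
    L.B (A.gen i m * A.gen j n) y = L.B (A.gen j n * A.gen i m) y := by
  obtain ⟨N, hN⟩ : ∃ N, m + n = N := ⟨_, rfl⟩
  induction N using Nat.strong_induction_on generalizing m n y with
  | _ N ih =>
  rcases A.gen_eq_zero_or_eq_one_or_validIdx i m with h | h | hm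
  · simp [h]
  · simp [h]
  rcases A.gen_eq_zero_or_eq_one_or_validIdx j n with h | h | hn
  · simp [h]
  · simp [h]
  induction y using FreeAlgebra.induction with
  | grade0 r =>
    rw [Algebra.algebraMap_eq_smul_one, map_smul, map_smul,
      L.apply_mul_comm_of_comm_rho C.comm_rho_one]
  | grade1 p =>
    rw [show FreeAlgebra.ι KQ p = A.gen p.1.1 p.1.2 from (A.gen_of_validIdx p.2).symm]
    exact L.apply_mul_comm_of_comm_rho (C.comm_rho_gen p.2) _ _
  | mul a b ha hb =>
    rw [L.apply_gen_mul_gen_mul hm hn hij, L.apply_gen_mul_gen_mul hn hm (A.a_eq_zero_symm hij),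
      Finset.sum_comm]
    refine Finset.sum_congr rfl fun t ht => Finset.sum_congr rfl fun s hs => ?_
    rw [Finset.mem_range] at hs ht
    have ha' : L.B (A.gen i s * A.gen j t) a = L.B (A.gen j t * A.gen i s) a := by
      rcases Nat.lt_or_ge (s + t) N with h | h
      · exact ih _ h s t a rfl
      · obtain ⟨rfl, rfl⟩ : s = m ∧ t = n := by omega
        exact ha
    have hb' : L.B (A.gen i (m - s) * A.gen j (n - t)) b =
        L.B (A.gen j (n - t) * A.gen i (m - s)) b := by
      rcases Nat.lt_or_ge (m - s + (n - t)) N with h | h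
      · exact ih _ h _ _ b rfl
      · obtain ⟨rfl, rfl⟩ : s = 0 ∧ t = 0 := by omega
        simpa using hb
    rw [ha', hb']
    ring
  | add a b ha hb =>
    simp only [map_add, ha, hb]

end LusztigForm

theorem commutator_in_radical_general {I : Type*} (A : BCMatrix I) (C : CoMult A)
    (ν : I → ℕ → KQ)
    (L : LusztigForm A C ν)
    (i j : I) (k l : ℕ)
    (hij : A.a i j = 0) :
    A.gen i k * A.gen j l - A.gen j l * A.gen i k ∈ L.radical := by
  rw [LusztigForm.radical, LinearMap.mem_ker]
  ext y
  rw [map_sub, LinearMap.sub_apply, LinearMap.zero_apply, sub_eq_zero]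
  exact L.apply_gen_mul_gen_comm hij k l y

/-- for `(i,k),(j,l) ∈ I^∞` with `a_{ij}=0`, the commutator
`X = f_{ik} f_{jl} - f_{jl} f_{ik}` lies in the radical `ℛ` of `( , )_L`. -/
theorem commutator_in_radical {I : Type*} [Countable I] (A : BCMatrix I) (C : CoMult A)
    (ν : I → ℕ → KQ) (hν : ∀ i l, A.validIdx i l → ν i l ≠ 0)
    (L : LusztigForm A C ν)
    (i j : I) (k l : ℕ) (hik : A.validIdx i k) (hjl : A.validIdx j l)
    (hij : A.a i j = 0) :
    A.gen i k * A.gen j l - A.gen j l * A.gen i k ∈ L.radical :=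
  commutator_in_radical_general A C ν L i j k l hij
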